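/- arXiv:0803.4238 — 3 statements merged into one kernel-verified Lean document; each statement's English description precedes it below -/
import Mathlib

section
/- Let γ ∈ (0,1), a_k = c·k^{-1-γ} with ∑ a_k = 1, and G(t) = ∏_{k=1}^∞ sin(a_k t)/(a_k t) for real t. Then there exist constants C > 0 and T > 0 such that for all real t with |t| ≥ T, |G(t)| ≤ exp(−C·|t|^{1/(1+γ)}). -/
/-!
Each factor satisfies `|sinc x| ≤ 1`, and `|sinc x| ≤ |x|⁻¹ ≤ e⁻¹` once `|x| ≥ e`. For the scales
`a k = c k^{-(1+γ)}` this happens for every `k ≤ (c|t|/e)^{1/(1+γ)}`, so `|G t|` is at most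
`e^{-N}` with `N` of order `|t|^{1/(1+γ)}`. Convergence of the product (needed for `∏'` not to be
the junk value `1`) follows from `|1 - sinc x| ≤ |x|` and summability of the scales.
-/

open Real Finset

lemma abs_sinc_le_inv_abs {x : ℝ} (hx : x ≠ 0) : |sinc x| ≤ |x|⁻¹ := by
  rw [sinc_of_ne_zero hx, abs_div, div_eq_mul_inv]
  exact mul_le_of_le_one_left (inv_nonneg.2 (abs_nonneg x)) (abs_sin_le_one x)

lemma abs_one_sub_sinc_le (x : ℝ) : |1 - sinc x| ≤ |x| := by
  rcases eq_or_ne x 0 with rfl | hx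
  · simp
  by_cases hx6 : |x| ≤ 6
  · have hpos : 0 < |x| := abs_pos.2 hx
    have hrepr : |1 - sinc x| = |x - sin x| / |x| := by
      rw [sinc_of_ne_zero hx, ← abs_div, sub_div, div_self hx]
    rw [hrepr, div_le_iff₀ hpos]
    nlinarith [abs_sub_sin_le x]
  · calc |1 - sinc x| ≤ |1| + |sinc x| := abs_sub _ _
      _ ≤ 2 := by linarith [abs_one (α := ℝ), abs_sinc_le_one x]
      _ ≤ |x| := by linarith

lemma multipliable_sinc_mul {ι : Type*} {b : ι → ℝ} (hb : Summable b) (t : ℝ) :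
    Multipliable fun i ↦ sinc (b i * t) := by
  have hsub : Summable fun i ↦ sinc (b i * t) - 1 :=
    (hb.abs.mul_right |t|).of_norm_bounded fun i ↦ by
      rw [norm_eq_abs, abs_sub_comm, ← abs_mul]
      exact abs_one_sub_sinc_le _
  simpa using Real.multipliable_one_add_of_summable hsub

lemma abs_tprod_le_prod_abs {ι : Type*} {f : ι → ℝ} (hf : Multipliable f)
    (hf1 : ∀ i, |f i| ≤ 1) (s : Finset ι) : |∏' i, f i| ≤ ∏ i ∈ s, |f i| :=
  le_of_tendsto hf.hasProd.norm <| (Filter.eventually_ge_atTop s).mono fun _ hu ↦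
    prod_le_prod_of_subset_of_le_one hu (fun i _ ↦ abs_nonneg (f i)) fun i _ _ ↦ hf1 i

lemma abs_tprod_sinc_le_exp_neg {b : ℕ → ℝ} (hb : Summable b) {t : ℝ} {N : ℕ}
    (hN : ∀ k < N, exp 1 ≤ |b k * t|) : |∏' k, sinc (b k * t)| ≤ exp (-N) := by
  have hfactor : ∀ k ∈ range N, |sinc (b k * t)| ≤ exp (-1) := fun k hk ↦ by
    have hk := hN k (mem_range.1 hk)
    have hne : b k * t ≠ 0 := abs_pos.1 ((exp_pos 1).trans_le hk)
    calc |sinc (b k * t)| ≤ |b k * t|⁻¹ := abs_sinc_le_inv_abs hne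
      _ ≤ (exp 1)⁻¹ := inv_anti₀ (exp_pos 1) hk
      _ = exp (-1) := (exp_neg 1).symm
  calc |∏' k, sinc (b k * t)| ≤ ∏ k ∈ range N, |sinc (b k * t)| :=
        abs_tprod_le_prod_abs (multipliable_sinc_mul hb t) (fun _ ↦ abs_sinc_le_one _) _
    _ ≤ ∏ _k ∈ range N, exp (-1) := prod_le_prod (fun _ _ ↦ abs_nonneg _) hfactor
    _ = exp (-N) := by rw [prod_const, card_range, ← exp_nat_mul, mul_neg_one]

lemma exp_one_le_abs_mul_rpow_neg {c p t n : ℝ} (hc : 0 < c) (hp : 0 < p) (hn : 0 < n)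
    (h : n ≤ (c * |t| / exp 1) ^ (1 / p)) : exp 1 ≤ |c * n ^ (-p) * t| := by
  rw [one_div, le_rpow_inv_iff_of_pos hn.le (by positivity) hp,
    le_div_iff₀ (exp_pos 1)] at h
  have hnp : 0 < n ^ p := rpow_pos_of_pos hn p
  rw [abs_mul, abs_of_pos (by positivity), rpow_neg hn.le, ← div_eq_mul_inv,
    div_mul_eq_mul_div, le_div_iff₀ hnp]
  linarith

theorem sinc_product_rapid_decay_general
    (γ c : ℝ) (hγ : γ ∈ Set.Ioo (0 : ℝ) 1) (hc : 0 < c)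
    (a : ℕ → ℝ) (ha : ∀ k : ℕ, 1 ≤ k → a k = c * (k : ℝ) ^ (-(1 + γ)))
    (G : ℝ → ℝ)
    (hG : ∀ t : ℝ, G t = ∏' k : ℕ,
      (if (a (k + 1) * t) = 0 then 1 else Real.sin (a (k + 1) * t) / (a (k + 1) * t))) :
    ∃ C > (0 : ℝ), ∃ T > (0 : ℝ), ∀ t : ℝ, T ≤ |t| →
      |G t| ≤ Real.exp (-C * |t| ^ (1 / (1 + γ))) := by
  have hp : 0 < 1 + γ := by linarith [hγ.1]
  have ha' : ∀ k : ℕ, a (k + 1) = c * ((k + 1 : ℕ) : ℝ) ^ (-(1 + γ)) := fun k ↦ ha _ k.succ_pos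
  have hsummable : Summable fun k ↦ a (k + 1) := by
    simp_rw [ha']
    exact ((summable_nat_add_iff 1).2 (summable_nat_rpow.2 (by linarith [hγ.1]))).mul_left c
  refine ⟨(c / exp 1) ^ (1 / (1 + γ)) / 2, by positivity, exp 1 / c, by positivity,
    fun t ht ↦ ?_⟩
  set x₀ := (c * |t| / exp 1) ^ (1 / (1 + γ))
  have hx₀ : 1 ≤ x₀ :=
    one_le_rpow ((one_le_div (exp_pos 1)).2 (by rwa [div_le_iff₀' hc] at ht)) (by positivity)
  have hN : ∀ k < ⌊x₀⌋₊, exp 1 ≤ |a (k + 1) * t| := fun k hk ↦ by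
    rw [ha']
    refine exp_one_le_abs_mul_rpow_neg hc hp (by positivity) ?_
    exact_mod_cast (Nat.le_floor_iff (by positivity)).1 hk
  calc |G t| ≤ exp (-⌊x₀⌋₊) := by rw [hG]; exact abs_tprod_sinc_le_exp_neg hsummable hN
    _ ≤ exp (-(x₀ / 2)) := exp_le_exp.2 (by linarith [Nat.div_two_lt_floor hx₀])
    _ = exp (-((c / exp 1) ^ (1 / (1 + γ)) / 2) * |t| ^ (1 / (1 + γ))) := by
      rw [show x₀ = (c / exp 1 * |t|) ^ (1 / (1 + γ)) by rw [div_mul_eq_mul_div],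
        mul_rpow (by positivity) (abs_nonneg t)]
      ring_nf

/-- Let `γ ∈ (0,1)`, `a k = c * k^(-1-γ)` with `∑_{k ≥ 1} a k = 1`, and
`G t = ∏_{k ≥ 1} sin (a k * t) / (a k * t)` for real `t` (factors interpreted
as `1` when `a k * t = 0`).  Then there are constants `C > 0` and `T > 0`
such that `|G t| ≤ exp (-C * |t| ^ (1/(1+γ)))` whenever `|t| ≥ T`. -/
theorem sinc_product_rapid_decay
    (γ c : ℝ) (hγ : γ ∈ Set.Ioo (0 : ℝ) 1) (hc : 0 < c)
    (a : ℕ → ℝ) (ha : ∀ k : ℕ, 1 ≤ k → a k = c * (k : ℝ) ^ (-(1 + γ)))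
    (hsum : ∑' k : ℕ, a (k + 1) = 1)
    (G : ℝ → ℝ)
    (hG : ∀ t : ℝ, G t = ∏' k : ℕ,
      (if (a (k + 1) * t) = 0 then 1 else Real.sin (a (k + 1) * t) / (a (k + 1) * t))) :
    ∃ C > (0 : ℝ), ∃ T > (0 : ℝ), ∀ t : ℝ, T ≤ |t| →
      |G t| ≤ Real.exp (-C * |t| ^ (1 / (1 + γ))) :=
  sinc_product_rapid_decay_general γ c hγ hc a ha G hG
end

section
/- For ν > 1, define M_ν(r) = (∫_{-∞}^{∞} e^{r|u| − |u|^ν} du)^{1/2} for r > 0. Then log M_ν(r) ∼ (ν−1)·r^{ν/(ν−1)} / (2·ν^{ν/(ν−1)}) as r → ∞, i.e. the ratio of the two sides tends to 1. -/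
/-!
With `S(r) = sup_{t ≥ 0} (r t - t ^ ν) = (ν - 1) (r / ν) ^ (ν / (ν - 1))`, the exponent
`r |u| - |u| ^ ν` is at most `S(r + 1) - |u|`, so the integral is at most `2 e ^ S(r + 1)`; and it
is at least `S(r) - r` on the unit interval to the left of the maximiser, so the integral is at
least `e ^ (S(r) - r)`. Since `S(r + 1) / S(r) → 1` and `r = o(S(r))`, the logarithm of the
integral is asymptotic to `S(r)`, which is twice the stated denominator.
-/

open Real MeasureTheory Filter Set Topology

/-- `sup_{t ≥ 0} (r * t - t ^ ν)`, attained at `t = (r / ν) ^ (ν - 1)⁻¹`. -/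
noncomputable def legendreRpow (ν r : ℝ) : ℝ := (ν - 1) * (r / ν) ^ (ν / (ν - 1))

lemma rpow_inv_sub_one_rpow {ν y : ℝ} (hy : 0 ≤ y) :
    (y ^ (ν - 1)⁻¹) ^ ν = y ^ (ν / (ν - 1)) := by
  rw [← rpow_mul hy, inv_mul_eq_div]

lemma rpow_inv_sub_one_rpow_eq_mul {ν y : ℝ} (hν : 1 < ν) (hy : 0 ≤ y) :
    (y ^ (ν - 1)⁻¹) ^ ν = y * y ^ (ν - 1)⁻¹ := by
  have h := rpow_add_one' (rpow_nonneg hy (ν - 1)⁻¹) (y := ν - 1) (by linarith)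
  rw [sub_add_cancel, rpow_inv_rpow hy (by linarith)] at h
  rw [h, mul_comm]

lemma mul_sub_rpow_le_legendreRpow {ν r t : ℝ} (hν : 1 < ν) (hr : 0 ≤ r) (ht : 0 ≤ t) :
    r * t - t ^ ν ≤ legendreRpow ν r := by
  have hν0 : 0 < ν := by linarith
  rcases hr.eq_or_lt with rfl | hr
  · simp [legendreRpow, zero_rpow (div_pos hν0 (sub_pos.2 hν)).ne', rpow_nonneg ht]
  set x := (r / ν) ^ (ν - 1)⁻¹
  have hx : 0 < x := by positivity
  have hxr : ν * x ^ ν = r * x := by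
    rw [rpow_inv_sub_one_rpow_eq_mul hν (y := r / ν) (by positivity), ← mul_assoc,
      mul_div_cancel₀ _ hν0.ne']
  -- tangent line of the convex function `t ^ ν` at `x`, by Bernoulli's inequality
  have bernoulli : 1 + ν * (t / x - 1) ≤ (t / x) ^ ν := by
    simpa using one_add_mul_self_le_rpow_one_add (s := t / x - 1) (by
      have := div_nonneg ht hx.le; linarith) hν.le
  have tangent : x ^ ν * (1 + ν * (t / x - 1)) ≤ t ^ ν := by
    calc _ ≤ x ^ ν * (t / x) ^ ν := by gcongr
      _ = t ^ ν := by rw [div_rpow ht hx.le]; field_simp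
  have expand : x ^ ν * (1 + ν * (t / x - 1)) = r * t - (ν - 1) * x ^ ν := by
    field_simp
    linear_combination t * hxr
  rw [legendreRpow, ← rpow_inv_sub_one_rpow (by positivity)]
  linarith

lemma integral_exp_neg_abs : ∫ u : ℝ, exp (-|u|) = 2 := by
  rw [integral_comp_abs (f := fun u => exp (-u)), integral_exp_neg_Ioi_zero, mul_one]

lemma integrable_exp_neg_abs : Integrable fun u : ℝ => exp (-|u|) :=
  .of_integral_ne_zero (by rw [integral_exp_neg_abs]; norm_num)

lemma exp_mul_abs_sub_abs_rpow_le {ν r : ℝ} (hν : 1 < ν) (hr : 0 ≤ r) (u : ℝ) :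
    exp (r * |u| - |u| ^ ν) ≤ exp (legendreRpow ν (r + 1)) * exp (-|u|) := by
  rw [← exp_add, exp_le_exp]
  linarith [mul_sub_rpow_le_legendreRpow hν (by linarith : 0 ≤ r + 1) (abs_nonneg u)]

lemma integrable_exp_mul_abs_sub_abs_rpow {ν r : ℝ} (hν : 1 < ν) (hr : 0 ≤ r) :
    Integrable fun u : ℝ => exp (r * |u| - |u| ^ ν) := by
  refine (integrable_exp_neg_abs.const_mul (exp (legendreRpow ν (r + 1)))).mono' (by fun_prop) (.of_forall fun u => ?_)
  rw [norm_of_nonneg (exp_pos _).le]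
  exact exp_mul_abs_sub_abs_rpow_le hν hr u

lemma log_integral_le_legendreRpow_add_one {ν r : ℝ} (hν : 1 < ν) (hr : 0 ≤ r) :
    log (∫ u : ℝ, exp (r * |u| - |u| ^ ν)) ≤ legendreRpow ν (r + 1) + log 2 := by
  have hint := integrable_exp_mul_abs_sub_abs_rpow hν hr
  have hle : ∫ u : ℝ, exp (r * |u| - |u| ^ ν) ≤ exp (legendreRpow ν (r + 1)) * 2 := by
    rw [← integral_exp_neg_abs, ← integral_const_mul]
    exact integral_mono hint (integrable_exp_neg_abs.const_mul _)
      (exp_mul_abs_sub_abs_rpow_le hν hr)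
  calc _ ≤ log (exp (legendreRpow ν (r + 1)) * 2) := log_le_log (integral_exp_pos hint) hle
    _ = _ := by rw [log_mul (exp_pos _).ne' two_ne_zero, log_exp]

lemma legendreRpow_sub_le_log_integral {ν r : ℝ} (hν : 1 < ν) (hr : ν ≤ r) :
    legendreRpow ν r - r ≤ log (∫ u : ℝ, exp (r * |u| - |u| ^ ν)) := by
  have hν0 : 0 < ν := by linarith
  have hr0 : 0 ≤ r := hν0.le.trans hr
  have hint := integrable_exp_mul_abs_sub_abs_rpow hν hr0
  set x := (r / ν) ^ (ν - 1)⁻¹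
  have hx : 1 ≤ x := one_le_rpow ((one_le_div hν0).2 hr) (inv_nonneg.2 (by linarith))
  have hxr : ν * x ^ ν = r * x := by
    rw [rpow_inv_sub_one_rpow_eq_mul hν (y := r / ν) (by positivity), ← mul_assoc,
      mul_div_cancel₀ _ hν0.ne']
  have hS : legendreRpow ν r = (ν - 1) * x ^ ν := by
    rw [legendreRpow, rpow_inv_sub_one_rpow (by positivity)]
  have hpt : ∀ u ∈ Icc (x - 1) x, exp (legendreRpow ν r - r) ≤ exp (r * |u| - |u| ^ ν) := by
    rintro u ⟨hxu, hux⟩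
    have hu : 0 ≤ u := by linarith
    rw [exp_le_exp, abs_of_nonneg hu, hS]
    have : u ^ ν ≤ x ^ ν := rpow_le_rpow hu hux hν0.le
    nlinarith
  have hle : exp (legendreRpow ν r - r) ≤ ∫ u : ℝ, exp (r * |u| - |u| ^ ν) := by
    calc _ = ∫ _ in Icc (x - 1) x, exp (legendreRpow ν r - r) := by simp
      _ ≤ ∫ u in Icc (x - 1) x, exp (r * |u| - |u| ^ ν) :=
        setIntegral_mono_on (integrableOn_const measure_Icc_lt_top.ne) hint.integrableOn
          measurableSet_Icc hpt
      _ ≤ _ := setIntegral_le_integral hint (.of_forall fun u => (exp_pos _).le)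
  simpa using log_le_log (exp_pos _) hle

lemma legendreRpow_pos {ν r : ℝ} (hν : 1 < ν) (hr : 0 < r) : 0 < legendreRpow ν r := by
  have : 0 < ν - 1 := by linarith
  unfold legendreRpow; positivity

lemma tendsto_legendreRpow_add_one_div {ν : ℝ} (hν : 1 < ν) :
    Tendsto (fun r => legendreRpow ν (r + 1) / legendreRpow ν r) atTop (𝓝 1) := by
  have hν0 : 0 < ν := by linarith
  have hlim : Tendsto (fun r : ℝ => (1 + r⁻¹) ^ (ν / (ν - 1))) atTop (𝓝 1) := by
    have h : ContinuousAt (fun s : ℝ => (1 + s) ^ (ν / (ν - 1))) 0 :=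
      (continuousAt_const.add continuousAt_id).rpow_const (.inl (by norm_num))
    simpa [Function.comp_def] using h.tendsto.comp tendsto_inv_atTop_zero
  refine hlim.congr' ?_
  filter_upwards [eventually_gt_atTop 0] with r hr
  have hν1 : ν - 1 ≠ 0 := by linarith
  rw [legendreRpow, legendreRpow, mul_div_mul_left _ _ hν1, ← div_rpow (by positivity)
    (by positivity), div_div_div_cancel_right₀ hν0.ne', add_div, div_self hr.ne', one_div]

lemma tendsto_div_legendreRpow {ν : ℝ} (hν : 1 < ν) :
    Tendsto (fun r => r / legendreRpow ν r) atTop (𝓝 0) := by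
  have hν0 : 0 < ν := by linarith
  have hν1 : 0 < ν - 1 := by linarith
  have hlim : Tendsto (fun r : ℝ => ν ^ (ν / (ν - 1)) / (ν - 1) * r ^ (-(ν - 1)⁻¹)) atTop (𝓝 0) := by
    simpa using (tendsto_rpow_neg_atTop (inv_pos.2 hν1)).const_mul (ν ^ (ν / (ν - 1)) / (ν - 1))
  refine hlim.congr' ?_
  filter_upwards [eventually_gt_atTop 0] with r hr
  have hp : ν / (ν - 1) = 1 + (ν - 1)⁻¹ := by field_simp; ring
  rw [legendreRpow, div_rpow hr.le hν0.le, rpow_neg hr.le, hp, rpow_one_add' hr.le (by positivity)]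
  field_simp

theorem tendsto_log_integral_div_legendreRpow {ν : ℝ} (hν : 1 < ν) :
    Tendsto (fun r => log (∫ u : ℝ, exp (r * |u| - |u| ^ ν)) / legendreRpow ν r)
      atTop (𝓝 1) := by
  have hS : Tendsto (legendreRpow ν) atTop atTop := by
    have hν1 : 0 < ν - 1 := by linarith
    exact ((tendsto_rpow_atTop (by positivity)).comp
      (tendsto_id.atTop_div_const (by linarith))).const_mul_atTop hν1
  have hlower : Tendsto (fun r => 1 - r / legendreRpow ν r) atTop (𝓝 1) := by
    simpa using (tendsto_div_legendreRpow hν).const_sub 1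
  have hupper : Tendsto (fun r => legendreRpow ν (r + 1) / legendreRpow ν r
      + log 2 / legendreRpow ν r) atTop (𝓝 1) := by
    simpa using (tendsto_legendreRpow_add_one_div hν).add (hS.const_div_atTop (log 2))
  refine tendsto_of_tendsto_of_tendsto_of_le_of_le' hlower hupper ?_ ?_
  · filter_upwards [eventually_ge_atTop ν] with r hr
    have hpos := legendreRpow_pos hν (by linarith)
    rw [le_div_iff₀ hpos, sub_mul, one_mul, div_mul_cancel₀ _ hpos.ne']
    exact legendreRpow_sub_le_log_integral hν hr
  · filter_upwards [eventually_gt_atTop 0] with r hr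
    rw [← add_div]
    exact div_le_div_of_nonneg_right (log_integral_le_legendreRpow_add_one hν hr.le)
      (legendreRpow_pos hν hr).le

/-- For `ν > 1`, let `M_ν r = (∫_ℝ exp (r * |u| - |u| ^ ν) du) ^ (1/2)`.
Then `log (M_ν r) ∼ (ν - 1) * r ^ (ν/(ν-1)) / (2 * ν ^ (ν/(ν-1)))` as `r → ∞`,
in the sense that the ratio of the two sides tends to `1`. -/
theorem log_M_asymptotics (ν : ℝ) (hν : 1 < ν)
    (M : ℝ → ℝ)
    (hM : ∀ r : ℝ, M r = (∫ u : ℝ, Real.exp (r * |u| - |u| ^ ν)) ^ ((1 : ℝ) / 2)) :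
    Tendsto (fun r : ℝ =>
        Real.log (M r) / ((ν - 1) * r ^ (ν / (ν - 1)) / (2 * ν ^ (ν / (ν - 1)))))
      atTop (nhds 1) := by
  refine (tendsto_log_integral_div_legendreRpow hν).congr' ?_
  filter_upwards [eventually_gt_atTop 0] with r hr
  have hI := integral_exp_pos (integrable_exp_mul_abs_sub_abs_rpow hν hr.le)
  rw [hM, log_rpow hI, legendreRpow, div_rpow hr.le (by linarith)]
  have : 0 < ν ^ (ν / (ν - 1)) := by positivity
  field_simp
end

section
/- For ν > 1 there exist constants C₁, C₂ > 0 (depending only on ν) such that for all r ≥ 0, ∑_{k ∈ ℤ} e^{r|k| − |k|^ν} ≤ C₁·exp(C₂·r^{ν/(ν−1)}). -/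
/-!
The Young-type inequality `r x ≤ x^ν / 2 + 2^{1/(ν-1)} r^{ν/(ν-1)}` (split on whether
`x^{ν-1} ≤ 2r`) bounds each term by `exp (-|k|^ν / 2) · exp (2^{1/(ν-1)} r^{ν/(ν-1)})`, and
`∑ exp (-|k|^ν / 2)` is a finite constant since `|k|^ν ≥ |k|` makes it dominated by a
geometric series.
-/

open Real

theorem Real.summable_int_exp_neg_mul_abs_rpow {ν c : ℝ} (hν : 1 ≤ ν) (hc : 0 < c) :
    Summable fun k : ℤ => exp (-c * |(k : ℝ)| ^ ν) := by
  have nat_le_rpow (n : ℕ) : (n : ℝ) ≤ (n : ℝ) ^ ν := by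
    rcases Nat.eq_zero_or_pos n with rfl | hn
    · simp [zero_rpow (by linarith : ν ≠ 0)]
    · exact self_le_rpow_of_one_le (by exact_mod_cast hn) hν
  have hnat := summable_exp_nat_mul_of_ge (neg_lt_zero.2 hc) nat_le_rpow
  apply Summable.of_nat_of_neg <;> simpa using hnat

theorem Real.mul_le_rpow_div_two_add {ν r x : ℝ} (hν : 1 < ν) (hr : 0 ≤ r) (hx : 0 ≤ x) :
    r * x ≤ x ^ ν / 2 + 2 ^ (1 / (ν - 1)) * r ^ (ν / (ν - 1)) := by
  have hν₁ : 0 < ν - 1 := by linarith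
  by_cases hsmall : x ^ (ν - 1) ≤ 2 * r
  · have hx_le : x ≤ (2 * r) ^ (1 / (ν - 1)) := by
      calc x = (x ^ (ν - 1)) ^ (1 / (ν - 1)) := by
            rw [← rpow_mul hx, mul_one_div_cancel hν₁.ne', rpow_one]
        _ ≤ (2 * r) ^ (1 / (ν - 1)) := rpow_le_rpow (rpow_nonneg hx _) hsmall (by positivity)
    have hexp : r * r ^ (1 / (ν - 1)) = r ^ (ν / (ν - 1)) := by
      rw [← rpow_one_add' hr (by positivity)]
      congr 1
      field_simp
      ring
    calc r * x ≤ r * (2 * r) ^ (1 / (ν - 1)) := mul_le_mul_of_nonneg_left hx_le hr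
      _ = 2 ^ (1 / (ν - 1)) * r ^ (ν / (ν - 1)) := by
        rw [mul_rpow zero_le_two hr, ← hexp]
        ring
      _ ≤ _ := le_add_of_nonneg_left (by positivity)
  · have hr_rpow : 0 ≤ (2 : ℝ) ^ (1 / (ν - 1)) * r ^ (ν / (ν - 1)) := by positivity
    have hsplit : x ^ ν = x ^ (ν - 1) * x := by
      rw [← rpow_add_one' hx (by linarith), sub_add_cancel]
    nlinarith [mul_le_mul_of_nonneg_right (not_le.mp hsmall).le hx]

/-- For `ν > 1` there are constants `C₁, C₂ > 0` (depending only on `ν`) such that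
for all `r ≥ 0` the sum `∑_{k ∈ ℤ} exp (r * |k| - |k| ^ ν)` converges and is bounded
by `C₁ * exp (C₂ * r ^ (ν/(ν-1)))`. -/
theorem sum_exp_bound (ν : ℝ) (hν : 1 < ν) :
    ∃ C₁ > (0 : ℝ), ∃ C₂ > (0 : ℝ), ∀ r : ℝ, 0 ≤ r →
      Summable (fun k : ℤ => Real.exp (r * |(k : ℝ)| - |(k : ℝ)| ^ ν)) ∧
      (∑' k : ℤ, Real.exp (r * |(k : ℝ)| - |(k : ℝ)| ^ ν)) ≤
        C₁ * Real.exp (C₂ * r ^ (ν / (ν - 1))) := by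
  set C₂ : ℝ := 2 ^ (1 / (ν - 1))
  have hg : Summable fun k : ℤ => exp (-(1 / 2) * |(k : ℝ)| ^ ν) :=
    summable_int_exp_neg_mul_abs_rpow hν.le one_half_pos
  refine ⟨_, hg.tsum_pos (fun _ => (exp_pos _).le) 0 (exp_pos _), C₂, by positivity, ?_⟩
  intro r hr
  have hbound (k : ℤ) : exp (r * |(k : ℝ)| - |(k : ℝ)| ^ ν) ≤
      exp (-(1 / 2) * |(k : ℝ)| ^ ν) * exp (C₂ * r ^ (ν / (ν - 1))) := by
    rw [← exp_add, exp_le_exp]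
    linarith [mul_le_rpow_div_two_add hν hr (abs_nonneg (k : ℝ))]
  have hg' := hg.mul_right (exp (C₂ * r ^ (ν / (ν - 1))))
  have hf := hg'.of_nonneg_of_le (fun _ => (exp_pos _).le) hbound
  refine ⟨hf, ?_⟩
  rw [← tsum_mul_right]
  exact hf.tsum_le_tsum hbound hg'
end
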